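/- arXiv:2512.02160 — 2 statements merged into one kernel-verified Lean document; each statement's English description precedes it below -/
import Mathlib

section
/- The Spread-Error difference decomposes in expectation into three bias terms: E[δ_τ] = −(Δμ)² + Δσ² − 2ΔΣ, where Δμ = μ_x − μ_y, Δσ² = σ_x² − σ_y², and ΔΣ = c − γ. -/
open MeasureTheory

/-- Covariance of two real random variables. -/
noncomputable def cov {Ω : Type*} [MeasurableSpace Ω] (μ : Measure Ω) (f g : Ω → ℝ) : ℝ :=
  ∫ ω, (f ω - ∫ x, f x ∂μ) * (g ω - ∫ x, g x ∂μ) ∂μ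

/-- Ensemble mean. -/
noncomputable def ensMean {Ω : Type*} {n : ℕ} (X : Fin n → Ω → ℝ) (ω : Ω) : ℝ :=
  (∑ i, X i ω) / n

/-- Unbiased ensemble variance. -/
noncomputable def ensVar {Ω : Type*} {n : ℕ} (X : Fin n → Ω → ℝ) (ω : Ω) : ℝ :=
  (∑ i, (X i ω - ensMean X ω) ^ 2) / ((n : ℝ) - 1)

/-- The Spread-Error statistic `δ_τ = ((n+1)/n) S_e² − (X̄ − Y)²`. -/
noncomputable def spreadError {Ω : Type*} {n : ℕ} (X : Fin n → Ω → ℝ) (Y : Ω → ℝ) (ω : Ω) : ℝ :=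
  (((n : ℝ) + 1) / n) * ensVar X ω - (ensMean X ω - Y ω) ^ 2

lemma integrable_mul_of_L2 {Ω : Type*} [MeasurableSpace Ω] {μ : Measure Ω}
    {f g : Ω → ℝ} (hf : MemLp f 2 μ) (hg : MemLp g 2 μ) :
    Integrable (fun ω => f ω * g ω) μ := by
  have h : (fun ω => f ω * g ω)
      = fun ω => ((f ω + g ω) ^ 2 - f ω ^ 2 - g ω ^ 2) / 2 := by
    funext ω; ring
  rw [h]
  exact (((hf.add hg).integrable_sq.sub hf.integrable_sq).sub hg.integrable_sq).div_const 2

lemma cov_eq_integral_mul {Ω : Type*} [MeasurableSpace Ω] {μ : Measure Ω}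
    [IsProbabilityMeasure μ] {f g : Ω → ℝ} (hf : MemLp f 2 μ) (hg : MemLp g 2 μ) :
    cov μ f g = (∫ ω, f ω * g ω ∂μ) - (∫ ω, f ω ∂μ) * (∫ ω, g ω ∂μ) := by
  have hfi : Integrable f μ := hf.integrable one_le_two
  have hgi : Integrable g μ := hg.integrable one_le_two
  have hmul := integrable_mul_of_L2 hf hg
  set a := ∫ ω, f ω ∂μ with ha
  set b := ∫ ω, g ω ∂μ with hb
  have h : ∀ ω, (f ω - a) * (g ω - b)
      = f ω * g ω - a * g ω - b * f ω + a * b := fun ω => by ring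
  have h2 : Integrable (fun ω => f ω * g ω - a * g ω) μ := hmul.sub (hgi.const_mul a)
  have h3 : Integrable (fun ω => f ω * g ω - a * g ω - b * f ω) μ := h2.sub (hfi.const_mul b)
  rw [cov]
  simp_rw [← ha, ← hb, h]
  rw [integral_add h3 (integrable_const _),
    integral_sub h2 (hfi.const_mul b),
    integral_sub hmul (hgi.const_mul a), integral_const_mul, integral_const_mul,
    integral_const]
  simp [← ha, ← hb]
  ring

/-- `E[δ_τ] = −(Δμ)² + Δσ² − 2ΔΣ`, where `Δμ = μ_x − μ_y`, `Δσ² = σ_x² − σ_y²`, `ΔΣ = c − γ`. -/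
theorem spread_error_decomposition
    {Ω : Type*} [MeasurableSpace Ω] (μ : Measure Ω) [IsProbabilityMeasure μ]
    (n : ℕ) (hn : 2 ≤ n) (X : Fin n → Ω → ℝ) (Y : Ω → ℝ)
    (hL2 : ∀ i, MemLp (X i) 2 μ) (hYL2 : MemLp Y 2 μ)
    (μx σx2 c μy σy2 γ : ℝ) (hσx2 : 0 < σx2) (hσy2 : 0 < σy2)
    (hmean : ∀ i, ∫ ω, X i ω ∂μ = μx)
    (hvar : ∀ i, cov μ (X i) (X i) = σx2)
    (hcov : ∀ i j, i ≠ j → cov μ (X i) (X j) = c)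
    (hmeanY : ∫ ω, Y ω ∂μ = μy)
    (hvarY : cov μ Y Y = σy2)
    (hcovXY : ∀ i, cov μ (X i) Y = γ) :
    ∫ ω, spreadError X Y ω ∂μ =
      -(μx - μy) ^ 2 + (σx2 - σy2) - 2 * (c - γ) := by
  have hn0 : (n : ℝ) ≠ 0 := by positivity
  have hn1 : (n : ℝ) - 1 ≠ 0 := by
    have : (2 : ℝ) ≤ n := by exact_mod_cast hn
    nlinarith
  -- second moments
  have hm : ∀ i j, ∫ ω, X i ω * X j ω ∂μ = (if i = j then σx2 else c) + μx * μx := by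
    intro i j
    by_cases h : i = j
    · subst h
      have hv := hvar i
      rw [cov_eq_integral_mul (hL2 i) (hL2 i), hmean i] at hv
      simp only [if_pos rfl, if_true]
      linarith
    · have hv := hcov i j h
      rw [cov_eq_integral_mul (hL2 i) (hL2 j), hmean i, hmean j] at hv
      simp only [if_neg h]
      linarith
  have hmy : ∀ i, ∫ ω, X i ω * Y ω ∂μ = γ + μx * μy := by
    intro i
    have hv := hcovXY i
    rw [cov_eq_integral_mul (hL2 i) hYL2, hmean i, hmeanY] at hv
    linarith
  have hyy : ∫ ω, Y ω ^ 2 ∂μ = σy2 + μy * μy := by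
    rw [cov_eq_integral_mul hYL2 hYL2, hmeanY] at hvarY
    simp_rw [pow_two]
    linarith
  -- integrability
  have hSmem : MemLp (fun ω => ∑ i, X i ω) 2 μ := by
    have := memLp_finset_sum' (Finset.univ) (fun i (_ : i ∈ Finset.univ) => hL2 i)
    convert this using 1
    funext ω
    simp
  have hI1 : Integrable (fun ω => ∑ i, X i ω ^ 2) μ :=
    integrable_finset_sum _ fun i _ => (hL2 i).integrable_sq
  have hI2 : Integrable (fun ω => (∑ i, X i ω) ^ 2) μ := hSmem.integrable_sq
  have hI3 : Integrable (fun ω => (∑ i, X i ω) * Y ω) μ :=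
    integrable_mul_of_L2 hSmem hYL2
  have hI4 : Integrable (fun ω => Y ω ^ 2) μ := hYL2.integrable_sq
  -- pointwise decomposition
  set c1 : ℝ := ((n : ℝ) + 1) / ((n : ℝ) * ((n : ℝ) - 1)) with hc1
  set c2 : ℝ := -(((n : ℝ) + 1) / ((n : ℝ) ^ 2 * ((n : ℝ) - 1))) - 1 / (n : ℝ) ^ 2 with hc2
  set c3 : ℝ := 2 / (n : ℝ) with hc3
  have hsum : ∀ ω, ∑ i, (X i ω - (∑ j, X j ω) / n) ^ 2
      = (∑ i, X i ω ^ 2) - (∑ i, X i ω) ^ 2 / n := by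
    intro ω
    have h1 : ∀ i ∈ Finset.univ, (X i ω - (∑ j, X j ω) / n) ^ 2
        = X i ω ^ 2 - (2 * ((∑ j, X j ω) / n)) * X i ω + ((∑ j, X j ω) / n) ^ 2 :=
      fun i _ => by ring
    rw [Finset.sum_congr rfl h1, Finset.sum_add_distrib, Finset.sum_sub_distrib,
      ← Finset.mul_sum, Finset.sum_const, Finset.card_univ, Fintype.card_fin]
    field_simp
    have hnn : (n : ℝ) ^ 2 * (n : ℝ)⁻¹ ^ 2 = 1 := by field_simp
    linear_combination (∑ j, X j ω) ^ 2 * hnn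
  have key : ∀ ω, spreadError X Y ω
      = c1 * (∑ i, X i ω ^ 2) + c2 * (∑ i, X i ω) ^ 2
        + c3 * ((∑ i, X i ω) * Y ω) + (-1) * Y ω ^ 2 := by
    intro ω
    rw [spreadError, ensVar]
    simp only [ensMean]
    rw [hsum ω, hc1, hc2, hc3]
    field_simp
    ring
  -- values of the four integrals
  have hA : ∫ ω, (∑ i, X i ω ^ 2) ∂μ = (n : ℝ) * (σx2 + μx * μx) := by
    rw [integral_finset_sum _ fun i _ => (hL2 i).integrable_sq]
    have : ∀ i ∈ Finset.univ, ∫ ω, X i ω ^ 2 ∂μ = σx2 + μx * μx := by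
      intro i _
      simp_rw [pow_two]
      rw [hm i i]
      simp
    rw [Finset.sum_congr rfl this, Finset.sum_const, Finset.card_univ, Fintype.card_fin,
      nsmul_eq_mul]
  have hB : ∫ ω, (∑ i, X i ω) ^ 2 ∂μ
      = (n : ℝ) * (σx2 + ((n : ℝ) - 1) * c + (n : ℝ) * (μx * μx)) := by
    have hsplit : ∫ ω, (∑ i, X i ω) ^ 2 ∂μ = ∑ i, ∑ j, ∫ ω, X i ω * X j ω ∂μ := by
      have hmulint : ∀ (i j : Fin n), Integrable (fun ω => X i ω * X j ω) μ :=
        fun i j => integrable_mul_of_L2 (hL2 i) (hL2 j)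
      simp_rw [pow_two, Finset.sum_mul_sum]
      rw [integral_finset_sum _ fun i _ => integrable_finset_sum _ fun j _ => hmulint i j]
      exact Finset.sum_congr rfl fun i _ => integral_finset_sum _ fun j _ => hmulint i j
    rw [hsplit]
    have hinner : ∀ i ∈ Finset.univ, ∑ j, ∫ ω, X i ω * X j ω ∂μ
        = σx2 + ((n : ℝ) - 1) * c + (n : ℝ) * (μx * μx) := by
      intro i _
      have h1 : ∀ j ∈ Finset.univ, ∫ ω, X i ω * X j ω ∂μ
          = (if i = j then σx2 - c else 0) + (c + μx * μx) := by
        intro j _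
        rw [hm i j]
        split_ifs <;> ring
      rw [Finset.sum_congr rfl h1, Finset.sum_add_distrib, Finset.sum_ite_eq,
        Finset.sum_const, Finset.card_univ, Fintype.card_fin]
      simp [nsmul_eq_mul]
      ring
    rw [Finset.sum_congr rfl hinner, Finset.sum_const, Finset.card_univ, Fintype.card_fin,
      nsmul_eq_mul]
  have hC : ∫ ω, (∑ i, X i ω) * Y ω ∂μ = (n : ℝ) * (γ + μx * μy) := by
    simp_rw [Finset.sum_mul]
    rw [integral_finset_sum _ fun i _ => integrable_mul_of_L2 (hL2 i) hYL2]
    have : ∀ i ∈ Finset.univ, ∫ ω, X i ω * Y ω ∂μ = γ + μx * μy := fun i _ => hmy i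
    rw [Finset.sum_congr rfl this, Finset.sum_const, Finset.card_univ, Fintype.card_fin,
      nsmul_eq_mul]
  -- assemble
  have J12 : Integrable (fun ω => c1 * (∑ i, X i ω ^ 2) + c2 * (∑ i, X i ω) ^ 2) μ :=
    (hI1.const_mul c1).add (hI2.const_mul c2)
  have J123 : Integrable (fun ω => c1 * (∑ i, X i ω ^ 2) + c2 * (∑ i, X i ω) ^ 2
      + c3 * ((∑ i, X i ω) * Y ω)) μ := J12.add (hI3.const_mul c3)
  simp only [key]
  rw [integral_add J123 (hI4.const_mul (-1)),
    integral_add J12 (hI3.const_mul c3),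
    integral_add (hI1.const_mul c1) (hI2.const_mul c2),
    integral_const_mul, integral_const_mul, integral_const_mul, integral_const_mul,
    hA, hB, hC, hyy, hc1, hc2, hc3]
  field_simp
  ring
end

section
/- Additive inflation shifts the Spread-Error difference by the noise variance: let Z_1, …, Z_n be square-integrable random variables with E[Z_i] = 0, Var(Z_i) = σ_a², Cov(Z_i, Z_j) = 0 for i ≠ j, and Cov(Z_i, X_j) = Cov(Z_i, Y) = 0 for all i, j. Then the inflated ensemble X̃_i = X_i + Z_i has the same second-order structure with climatological variance σ_x² + σ_a² and unchanged c and γ, and its Spread-Error statistic δ̃_τ satisfies E[δ̃_τ] = E[δ_τ] + σ_a²; in particular, if E[δ_τ] < 0, choosing σ_a² = −E[δ_τ] yields E[δ̃_τ] = 0 while the climatological variance bias increases from Δσ² to Δσ² + σ_a². -/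
open MeasureTheory

section Aux

variable {Ω : Type*} [MeasurableSpace Ω] {μ : Measure Ω}

lemma aux_integrable_mul {f g : Ω → ℝ} (hf : MemLp f 2 μ) (hg : MemLp g 2 μ) :
    Integrable (fun ω => f ω * g ω) μ := by
  have h1 : Integrable (fun ω => (f ω + g ω) ^ 2) μ := (hf.add hg).integrable_sq
  have h2 := hf.integrable_sq
  have h3 := hg.integrable_sq
  have heq : (fun ω => f ω * g ω) =
      fun ω => ((f ω + g ω) ^ 2 - f ω ^ 2 - g ω ^ 2) / 2 := by
    funext ω; ring
  rw [heq]
  exact ((h1.sub h2).sub h3).div_const 2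

lemma aux_mom [IsProbabilityMeasure μ] {f g : Ω → ℝ} (hf : MemLp f 2 μ) (hg : MemLp g 2 μ) :
    ∫ ω, f ω * g ω ∂μ = cov μ f g + (∫ ω, f ω ∂μ) * (∫ ω, g ω ∂μ) := by
  have hfi := hf.integrable one_le_two
  have hgi := hg.integrable one_le_two
  have hfg := aux_integrable_mul hf hg
  set a := ∫ ω, f ω ∂μ with ha
  set b := ∫ ω, g ω ∂μ with hb
  have key : ∀ ω, (f ω - a) * (g ω - b) =
      f ω * g ω - (a * g ω + b * f ω - a * b) := by
    intro ω; ring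
  have hc : cov μ f g = ∫ ω, (f ω * g ω - (a * g ω + b * f ω - a * b)) ∂μ := by
    unfold cov
    exact integral_congr_ae (Filter.Eventually.of_forall key)
  have j1 : Integrable (fun ω => a * g ω) μ := hgi.const_mul a
  have j2 : Integrable (fun ω => b * f ω) μ := hfi.const_mul b
  have j12 : Integrable (fun ω => a * g ω + b * f ω) μ := j1.add j2
  have j123 : Integrable (fun ω => a * g ω + b * f ω - a * b) μ :=
    j12.sub (integrable_const (a * b))
  rw [hc, integral_sub hfg j123, integral_sub j12 (integrable_const (a * b)),
    integral_add j1 j2, integral_const_mul _ _, integral_const_mul _ _, integral_const]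
  simp only [measure_univ, ENNReal.toReal_one, smul_eq_mul, one_mul, ← ha, ← hb, probReal_univ, mul_one]
  ring

lemma aux_cov_eq [IsProbabilityMeasure μ] {f g : Ω → ℝ} (hf : MemLp f 2 μ) (hg : MemLp g 2 μ) :
    cov μ f g = (∫ ω, f ω * g ω ∂μ) - (∫ ω, f ω ∂μ) * (∫ ω, g ω ∂μ) := by
  rw [aux_mom hf hg]; ring

lemma aux_cov_add_add [IsProbabilityMeasure μ] {f g h k : Ω → ℝ}
    (hf : MemLp f 2 μ) (hg : MemLp g 2 μ) (hh : MemLp h 2 μ) (hk : MemLp k 2 μ) :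
    cov μ (fun ω => f ω + g ω) (fun ω => h ω + k ω) =
      cov μ f h + cov μ f k + cov μ g h + cov μ g k := by
  have e1 : ∫ ω, (f ω + g ω) * (h ω + k ω) ∂μ =
      (∫ ω, f ω * h ω ∂μ) + (∫ ω, f ω * k ω ∂μ) + (∫ ω, g ω * h ω ∂μ) +
        (∫ ω, g ω * k ω ∂μ) := by
    have hpt : ∀ ω, (f ω + g ω) * (h ω + k ω) =
        f ω * h ω + f ω * k ω + (g ω * h ω + g ω * k ω) := by intro ω; ring
    have k1 : Integrable (fun ω => f ω * h ω + f ω * k ω) μ :=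
      (aux_integrable_mul hf hh).add (aux_integrable_mul hf hk)
    have k2 : Integrable (fun ω => g ω * h ω + g ω * k ω) μ :=
      (aux_integrable_mul hg hh).add (aux_integrable_mul hg hk)
    rw [integral_congr_ae (Filter.Eventually.of_forall hpt),
      integral_add k1 k2,
      integral_add (aux_integrable_mul hf hh) (aux_integrable_mul hf hk),
      integral_add (aux_integrable_mul hg hh) (aux_integrable_mul hg hk)]
    ring
  have e2 : ∫ ω, (f ω + g ω) ∂μ = (∫ ω, f ω ∂μ) + (∫ ω, g ω ∂μ) :=
    integral_add (hf.integrable one_le_two) (hg.integrable one_le_two)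
  have e3 : ∫ ω, (h ω + k ω) ∂μ = (∫ ω, h ω ∂μ) + (∫ ω, k ω ∂μ) :=
    integral_add (hh.integrable one_le_two) (hk.integrable one_le_two)
  have hfg2 : MemLp (fun ω => f ω + g ω) 2 μ := hf.add hg
  have hhk2 : MemLp (fun ω => h ω + k ω) 2 μ := hh.add hk
  rw [aux_cov_eq hfg2 hhk2, e1, e2, e3,
    aux_cov_eq hf hh, aux_cov_eq hf hk, aux_cov_eq hg hh, aux_cov_eq hg hk]
  ring

lemma aux_cov_comm (f g : Ω → ℝ) : cov μ f g = cov μ g f := by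
  unfold cov
  exact integral_congr_ae (Filter.Eventually.of_forall fun ω => by ring)

/-- Expectation of the Spread-Error statistic for an exchangeable second-order ensemble. -/
lemma aux_integral_spreadError [IsProbabilityMeasure μ]
    (n : ℕ) (hn : 2 ≤ n) (X : Fin n → Ω → ℝ) (Y : Ω → ℝ)
    (hL2 : ∀ i, MemLp (X i) 2 μ) (hYL2 : MemLp Y 2 μ)
    (μx σx2 c μy σy2 γ : ℝ)
    (hmean : ∀ i, ∫ ω, X i ω ∂μ = μx)
    (hvar : ∀ i, cov μ (X i) (X i) = σx2)
    (hcov : ∀ i j, i ≠ j → cov μ (X i) (X j) = c)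
    (hmeanY : ∫ ω, Y ω ∂μ = μy)
    (hvarY : cov μ Y Y = σy2)
    (hcovXY : ∀ i, cov μ (X i) Y = γ) :
    ∫ ω, spreadError X Y ω ∂μ = σx2 - 2 * c + 2 * γ - σy2 - (μx - μy) ^ 2 := by
  have h2 : (2 : ℝ) ≤ (n : ℝ) := by exact_mod_cast hn
  have hn0 : (n : ℝ) ≠ 0 := by linarith
  have hn1 : (n : ℝ) - 1 ≠ 0 := by intro h; linarith
  set a : ℝ := ((n : ℝ) + 1) / ((n : ℝ) * ((n : ℝ) - 1)) with ha
  set b : ℝ := ((n : ℝ) + 1) / ((n : ℝ) ^ 2 * ((n : ℝ) - 1)) + 1 / (n : ℝ) ^ 2 with hb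
  have key : ∀ ω, spreadError X Y ω =
      a * (∑ i, X i ω * X i ω) - b * (∑ i, ∑ j, X i ω * X j ω)
        + (2 / (n : ℝ)) * (∑ i, X i ω * Y ω) - Y ω * Y ω := by
    intro ω
    have e1 : ∑ i, (X i ω - ensMean X ω) ^ 2 =
        (∑ i, X i ω * X i ω) - (∑ i, X i ω) * (∑ i, X i ω) / (n : ℝ) := by
      unfold ensMean
      rw [Finset.sum_congr rfl (fun i _ =>
        show (X i ω - (∑ k, X k ω) / (n : ℝ)) ^ 2 =
            X i ω * X i ω - (2 * ((∑ k, X k ω) / (n : ℝ))) * X i ω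
              + ((∑ k, X k ω) / (n : ℝ)) * ((∑ k, X k ω) / (n : ℝ)) from by ring)]
      rw [Finset.sum_add_distrib, Finset.sum_sub_distrib, ← Finset.mul_sum,
        Finset.sum_const, Finset.card_univ, Fintype.card_fin, nsmul_eq_mul]
      field_simp
      ring
    have e2 : ∑ i, ∑ j, X i ω * X j ω = (∑ i, X i ω) * (∑ i, X i ω) :=
      (Finset.sum_mul_sum _ _ _ _).symm
    have e3 : ∑ i, X i ω * Y ω = (∑ i, X i ω) * Y ω := by
      rw [← Finset.sum_mul]
    unfold spreadError ensVar
    rw [e1, e2, e3]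
    unfold ensMean
    rw [ha, hb]
    field_simp
    ring
  have hXX : ∀ i j, Integrable (fun ω => X i ω * X j ω) μ := fun i j =>
    aux_integrable_mul (hL2 i) (hL2 j)
  have hXY : ∀ i, Integrable (fun ω => X i ω * Y ω) μ := fun i =>
    aux_integrable_mul (hL2 i) hYL2
  have hYY : Integrable (fun ω => Y ω * Y ω) μ := aux_integrable_mul hYL2 hYL2
  have I1 : Integrable (fun ω => ∑ i, X i ω * X i ω) μ :=
    integrable_finset_sum _ fun i _ => hXX i i
  have I2 : Integrable (fun ω => ∑ i, ∑ j, X i ω * X j ω) μ :=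
    integrable_finset_sum _ fun i _ => integrable_finset_sum _ fun j _ => hXX i j
  have I3 : Integrable (fun ω => ∑ i, X i ω * Y ω) μ :=
    integrable_finset_sum _ fun i _ => hXY i
  have v1 : ∀ i j, ∫ ω, X i ω * X j ω ∂μ = (if i = j then σx2 else c) + μx * μx := by
    intro i j
    rw [aux_mom (hL2 i) (hL2 j), hmean, hmean]
    by_cases h : i = j
    · subst h; simp [hvar]
    · simp [h, hcov i j h]
  have v2 : ∀ i, ∫ ω, X i ω * Y ω ∂μ = γ + μx * μy := by
    intro i
    rw [aux_mom (hL2 i) hYL2, hmean, hmeanY, hcovXY]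
  have v3 : ∫ ω, Y ω * Y ω ∂μ = σy2 + μy * μy := by
    rw [aux_mom hYL2 hYL2, hmeanY, hvarY]
  have s1 : ∫ ω, (∑ i, X i ω * X i ω) ∂μ = (n : ℝ) * (σx2 + μx * μx) := by
    rw [integral_finset_sum _ fun i _ => hXX i i,
      Finset.sum_congr rfl fun i _ => v1 i i]
    simp [Finset.sum_const, Finset.card_univ]
    ring
  have s2 : ∫ ω, (∑ i, ∑ j, X i ω * X j ω) ∂μ =
      (n : ℝ) * ((σx2 + μx * μx) + ((n : ℝ) - 1) * (c + μx * μx)) := by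
    rw [integral_finset_sum _ fun i _ => integrable_finset_sum _ fun j _ => hXX i j]
    have hrow : ∀ i : Fin n, ∫ ω, (∑ j, X i ω * X j ω) ∂μ =
        (σx2 + μx * μx) + ((n : ℝ) - 1) * (c + μx * μx) := by
      intro i
      rw [integral_finset_sum _ fun j _ => hXX i j,
        Finset.sum_congr rfl fun j _ => v1 i j]
      have h' : ∀ j : Fin n, ((if i = j then σx2 else c) + μx * μx) =
          (c + μx * μx) + (if i = j then σx2 - c else 0) := by
        intro j; by_cases h : i = j <;> simp [h] <;> ring
      rw [Finset.sum_congr rfl fun j _ => h' j, Finset.sum_add_distrib,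
        Finset.sum_const, Finset.card_univ, Fintype.card_fin, nsmul_eq_mul,
        Finset.sum_ite_eq, if_pos (Finset.mem_univ i)]
      ring
    rw [Finset.sum_congr rfl fun i _ => hrow i, Finset.sum_const, Finset.card_univ,
      Fintype.card_fin, nsmul_eq_mul]
  have s3 : ∫ ω, (∑ i, X i ω * Y ω) ∂μ = (n : ℝ) * (γ + μx * μy) := by
    rw [integral_finset_sum _ fun i _ => hXY i, Finset.sum_congr rfl fun i _ => v2 i]
    simp [Finset.sum_const, Finset.card_univ]
    ring
  have J1 : Integrable (fun ω => a * ∑ i, X i ω * X i ω) μ := I1.const_mul a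
  have J2 : Integrable (fun ω => b * ∑ i, ∑ j, X i ω * X j ω) μ := I2.const_mul b
  have J3 : Integrable (fun ω => (2 / (n : ℝ)) * ∑ i, X i ω * Y ω) μ :=
    I3.const_mul (2 / (n : ℝ))
  have J12 : Integrable (fun ω => a * (∑ i, X i ω * X i ω)
      - b * ∑ i, ∑ j, X i ω * X j ω) μ := J1.sub J2
  have J123 : Integrable (fun ω => a * (∑ i, X i ω * X i ω)
      - b * (∑ i, ∑ j, X i ω * X j ω) + (2 / (n : ℝ)) * ∑ i, X i ω * Y ω) μ := J12.add J3
  rw [integral_congr_ae (Filter.Eventually.of_forall key),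
    integral_sub J123 hYY, integral_add J12 J3, integral_sub J1 J2,
    integral_const_mul _ _, integral_const_mul _ _, integral_const_mul _ _, s1, s2, s3, v3, ha, hb]
  field_simp
  ring

end Aux

/-- Additive inflation shifts the Spread-Error difference by the noise variance: the inflated
ensemble `X̃_i = X_i + Z_i` keeps the second-order structure with climatological variance
`σ_x² + σ_a²` and unchanged `c`, `γ`, and `E[δ̃_τ] = E[δ_τ] + σ_a²`; if `E[δ_τ] < 0` and
`σ_a² = −E[δ_τ]` then `E[δ̃_τ] = 0` while the variance bias becomes `Δσ² + σ_a²`. -/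
theorem additive_inflation_spread_error
    {Ω : Type*} [MeasurableSpace Ω] (μ : Measure Ω) [IsProbabilityMeasure μ]
    (n : ℕ) (hn : 2 ≤ n) (X Z : Fin n → Ω → ℝ) (Y : Ω → ℝ)
    (hL2 : ∀ i, MemLp (X i) 2 μ) (hYL2 : MemLp Y 2 μ) (hZL2 : ∀ i, MemLp (Z i) 2 μ)
    (μx σx2 c μy σy2 γ σa2 : ℝ) (hσx2 : 0 < σx2) (hσy2 : 0 < σy2)
    (hmean : ∀ i, ∫ ω, X i ω ∂μ = μx)
    (hvar : ∀ i, cov μ (X i) (X i) = σx2)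
    (hcov : ∀ i j, i ≠ j → cov μ (X i) (X j) = c)
    (hmeanY : ∫ ω, Y ω ∂μ = μy)
    (hvarY : cov μ Y Y = σy2)
    (hcovXY : ∀ i, cov μ (X i) Y = γ)
    (hZmean : ∀ i, ∫ ω, Z i ω ∂μ = 0)
    (hZvar : ∀ i, cov μ (Z i) (Z i) = σa2)
    (hZcov : ∀ i j, i ≠ j → cov μ (Z i) (Z j) = 0)
    (hZX : ∀ i j, cov μ (Z i) (X j) = 0)
    (hZY : ∀ i, cov μ (Z i) Y = 0) :
    (∀ i, ∫ ω, X i ω + Z i ω ∂μ = μx) ∧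
    (∀ i, cov μ (fun ω => X i ω + Z i ω) (fun ω => X i ω + Z i ω) = σx2 + σa2) ∧
    (∀ i j, i ≠ j →
      cov μ (fun ω => X i ω + Z i ω) (fun ω => X j ω + Z j ω) = c) ∧
    (∀ i, cov μ (fun ω => X i ω + Z i ω) Y = γ) ∧
    (∫ ω, spreadError (fun i ω => X i ω + Z i ω) Y ω ∂μ) =
      (∫ ω, spreadError X Y ω ∂μ) + σa2 ∧
    ((∫ ω, spreadError X Y ω ∂μ) < 0 → σa2 = -(∫ ω, spreadError X Y ω ∂μ) →
      (∫ ω, spreadError (fun i ω => X i ω + Z i ω) Y ω ∂μ) = 0 ∧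
      (σx2 + σa2) - σy2 = (σx2 - σy2) + σa2) := by
  have hXZ : ∀ i j, cov μ (X i) (Z j) = 0 := fun i j => by
    rw [aux_cov_comm]; exact hZX j i
  have hmean' : ∀ i, ∫ ω, X i ω + Z i ω ∂μ = μx := by
    intro i
    rw [integral_add ((hL2 i).integrable one_le_two) ((hZL2 i).integrable one_le_two),
      hmean, hZmean, add_zero]
  have hvar' : ∀ i, cov μ (fun ω => X i ω + Z i ω) (fun ω => X i ω + Z i ω) = σx2 + σa2 := by
    intro i
    rw [aux_cov_add_add (hL2 i) (hZL2 i) (hL2 i) (hZL2 i), hvar, hZvar, hXZ, hZX]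
    ring
  have hcov' : ∀ i j, i ≠ j →
      cov μ (fun ω => X i ω + Z i ω) (fun ω => X j ω + Z j ω) = c := by
    intro i j hij
    rw [aux_cov_add_add (hL2 i) (hZL2 i) (hL2 j) (hZL2 j), hcov i j hij, hXZ, hZX,
      hZcov i j hij]
    ring
  have hcovY' : ∀ i, cov μ (fun ω => X i ω + Z i ω) Y = γ := by
    intro i
    have hs : MemLp (fun ω => X i ω + Z i ω) 2 μ := (hL2 i).add (hZL2 i)
    have hpt : ∀ ω, (X i ω + Z i ω) * Y ω = X i ω * Y ω + Z i ω * Y ω := fun ω => by ring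
    have e : ∫ ω, (X i ω + Z i ω) * Y ω ∂μ =
        (∫ ω, X i ω * Y ω ∂μ) + ∫ ω, Z i ω * Y ω ∂μ := by
      rw [integral_congr_ae (Filter.Eventually.of_forall hpt),
        integral_add (aux_integrable_mul (hL2 i) hYL2) (aux_integrable_mul (hZL2 i) hYL2)]
    rw [aux_cov_eq hs hYL2, e, aux_mom (hL2 i) hYL2, aux_mom (hZL2 i) hYL2,
      hmean, hmeanY, hZmean, hcovXY, hZY, hmean' i]
    ring
  have hL2' : ∀ i, MemLp (fun ω => X i ω + Z i ω) 2 μ := fun i => (hL2 i).add (hZL2 i)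
  have E1 := aux_integral_spreadError (μ := μ) n hn X Y hL2 hYL2 μx σx2 c μy σy2 γ
    hmean hvar hcov hmeanY hvarY hcovXY
  have E2 := aux_integral_spreadError (μ := μ) n hn (fun i ω => X i ω + Z i ω) Y hL2' hYL2
    μx (σx2 + σa2) c μy σy2 γ hmean' hvar' hcov' hmeanY hvarY hcovY'
  refine ⟨hmean', hvar', hcov', hcovY', by rw [E1, E2]; ring, ?_⟩
  intro _ hσa
  constructor
  · rw [E2, hσa, E1]; ring
  · ring
end
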